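/- Let Y ∈ {0,1}, A ∈ {0,1}, and Z be discrete random variables such that Y and A are conditionally independent given Z, Z and A are conditionally independent given Y, and Var(Y | Z=z) > 0 for every value z of Z with positive probability. Then A is independent of the pair (Z,Y). -/

import Mathlib

/-!
On the support of `Z`, positive conditional variance of `Y` means both fibres `{Z = z, Y = y}`
have positive mass. Computing `μ {Z = z, Y = y, A = a}` through either conditional independence
then gives `P(A = a | Z = z) = P(A = a | Y = y)` for every `y`, so `P(A = a | Y = ·)` is constant,
equal to `P(A = a)` by total probability, and hence `P(A = a | Z = z) = P(A = a)` whenever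
`P(Z = z) > 0`. Together with `Y ⟂ A | Z` this is the independence of `A` and `(Z, Y)`.
-/

open MeasureTheory ProbabilityTheory Set

section Variance

variable {Ω : Type*} [MeasurableSpace Ω] {ν : Measure Ω} [IsProbabilityMeasure ν]

lemma variance_const (c : ℝ) : Var[fun _ => c; ν] = 0 := by
  simp [variance, evariance]

lemma measure_preimage_ne_zero_of_variance_pos {Y : Ω → Bool} (g : Bool → ℝ)
    (h : 0 < Var[fun ω => g (Y ω); ν]) (b : Bool) : ν (Y ⁻¹' {b}) ≠ 0 := by
  intro hb
  have hY : ∀ᵐ ω ∂ν, Y ω = !b := by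
    rw [ae_iff]
    convert hb using 2
    ext ω
    simp [Bool.eq_not_iff]
  have hconst : (fun ω => g (Y ω)) =ᵐ[ν] fun _ => g !b := by
    filter_upwards [hY] with ω hω
    rw [hω]
  rw [variance_congr hconst, variance_const] at h
  exact h.false

end Variance

section Cond

variable {Ω : Type*} [MeasurableSpace Ω] {μ : Measure Ω} [IsFiniteMeasure μ] {s t u : Set Ω}

lemma measure_inter_inter_eq_mul_cond (hs : MeasurableSet s)
    (h : μ[t ∩ u | s] = μ[t | s] * μ[u | s]) : μ (s ∩ t ∩ u) = μ (s ∩ t) * μ[u | s] := by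
  rw [inter_assoc, ← cond_mul_eq_inter hs, h, ← cond_mul_eq_inter hs t]
  ring

lemma cond_eq_cond_of_inter_ne_zero (hs : MeasurableSet s) (ht : MeasurableSet t)
    (hst : μ (s ∩ t) ≠ 0) (hs_indep : μ[t ∩ u | s] = μ[t | s] * μ[u | s])
    (ht_indep : μ[s ∩ u | t] = μ[s | t] * μ[u | t]) : μ[u | s] = μ[u | t] := by
  have h := measure_inter_inter_eq_mul_cond hs hs_indep
  rw [inter_comm s t, measure_inter_inter_eq_mul_cond ht ht_indep] at h
  exact (ENNReal.mul_right_inj hst (measure_ne_top μ _)).1 (by rw [inter_comm s t, h])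

lemma measure_eq_of_cond_eq_of_cond_compl_eq [IsProbabilityMeasure μ] {c : ENNReal}
    (hs : MeasurableSet s) (h : μ[t | s] = c) (hc : μ[t | sᶜ] = c) : μ t = c := by
  rw [← cond_add_cond_compl_eq hs μ, h, hc, ← mul_add, measure_add_measure_compl hs,
    measure_univ, mul_one]

end Cond

theorem fairness_impossibility_refined_general
    {Ω γ : Type*} [MeasurableSpace Ω] (μ : Measure Ω) [IsProbabilityMeasure μ]
    [MeasurableSpace γ] [MeasurableSingletonClass γ]
    (Y A : Ω → Bool) (Z : Ω → γ)
    (hY : Measurable Y) (hZ : Measurable Z)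
    -- Y ⟂ A | Z
    (hYA_Z : ∀ z, μ (Z ⁻¹' {z}) ≠ 0 → ∀ y a,
      μ[|Z ⁻¹' {z}] (Y ⁻¹' {y} ∩ A ⁻¹' {a}) =
        μ[|Z ⁻¹' {z}] (Y ⁻¹' {y}) * μ[|Z ⁻¹' {z}] (A ⁻¹' {a}))
    -- Z ⟂ A | Y
    (hZA_Y : ∀ y, μ (Y ⁻¹' {y}) ≠ 0 → ∀ z a,
      μ[|Y ⁻¹' {y}] (Z ⁻¹' {z} ∩ A ⁻¹' {a}) =
        μ[|Y ⁻¹' {y}] (Z ⁻¹' {z}) * μ[|Y ⁻¹' {y}] (A ⁻¹' {a}))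
    -- Var(Y | Z = z) > 0 for every z in the support of Z
    (hvar : ∀ z, μ (Z ⁻¹' {z}) ≠ 0 →
      0 < variance (fun ω => if Y ω then (1 : ℝ) else 0) (μ[|Z ⁻¹' {z}])) :
    -- A is independent of (Z, Y)
    ∀ a z y, μ (A ⁻¹' {a} ∩ (Z ⁻¹' {z} ∩ Y ⁻¹' {y})) =
      μ (A ⁻¹' {a}) * μ (Z ⁻¹' {z} ∩ Y ⁻¹' {y}) := by
  intro a z y
  have hZz : MeasurableSet (Z ⁻¹' {z}) := hZ (measurableSet_singleton z)
  have hYb (b : Bool) : MeasurableSet (Y ⁻¹' {b}) := hY (measurableSet_singleton b)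
  by_cases hz : μ (Z ⁻¹' {z}) = 0
  · have hzy := measure_inter_null_of_null_left (Y ⁻¹' {y}) hz
    rw [measure_inter_null_of_null_right _ hzy, hzy, mul_zero]
  have hzb (b : Bool) : μ (Z ⁻¹' {z} ∩ Y ⁻¹' {b}) ≠ 0 :=
    have := cond_isProbabilityMeasure (μ := μ) hz
    (inter_pos_of_cond_ne_zero hZz
      (measure_preimage_ne_zero_of_variance_pos (fun b => if b then 1 else 0) (hvar z hz) b)).ne'
  have hcond (b : Bool) : μ[A ⁻¹' {a} | Y ⁻¹' {b}] = μ[A ⁻¹' {a} | Z ⁻¹' {z}] :=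
    (cond_eq_cond_of_inter_ne_zero hZz (hYb b) (hzb b) (hYA_Z z hz b a)
      (hZA_Y b (fun h => hzb b (measure_inter_null_of_null_right _ h)) z a)).symm
  have hA : μ (A ⁻¹' {a}) = μ[A ⁻¹' {a} | Z ⁻¹' {z}] :=
    measure_eq_of_cond_eq_of_cond_compl_eq (hYb true) (hcond true)
      (by rw [← preimage_compl, Bool.compl_singleton]; exact hcond false)
  rw [inter_comm, measure_inter_inter_eq_mul_cond hZz (hYA_Z z hz y a), hA, mul_comm]

/-- Refinement of the impossibility theorem: the positivity
condition is replaced by the weaker condition that Y cannot be perfectly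
predicted from any realization of Z, i.e. Var(Y | Z = z) > 0 on the support
of Z. Then A is independent of the pair (Z, Y). -/
theorem fairness_impossibility_refined
    {Ω γ : Type*} [MeasurableSpace Ω] (μ : Measure Ω) [IsProbabilityMeasure μ]
    [MeasurableSpace γ] [MeasurableSingletonClass γ] [Countable γ]
    (Y A : Ω → Bool) (Z : Ω → γ)
    (hY : Measurable Y) (hA : Measurable A) (hZ : Measurable Z)
    -- Y ⟂ A | Z
    (hYA_Z : ∀ z, μ (Z ⁻¹' {z}) ≠ 0 → ∀ y a,
      μ[|Z ⁻¹' {z}] (Y ⁻¹' {y} ∩ A ⁻¹' {a}) =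
        μ[|Z ⁻¹' {z}] (Y ⁻¹' {y}) * μ[|Z ⁻¹' {z}] (A ⁻¹' {a}))
    -- Z ⟂ A | Y
    (hZA_Y : ∀ y, μ (Y ⁻¹' {y}) ≠ 0 → ∀ z a,
      μ[|Y ⁻¹' {y}] (Z ⁻¹' {z} ∩ A ⁻¹' {a}) =
        μ[|Y ⁻¹' {y}] (Z ⁻¹' {z}) * μ[|Y ⁻¹' {y}] (A ⁻¹' {a}))
    -- Var(Y | Z = z) > 0 for every z in the support of Z
    (hvar : ∀ z, μ (Z ⁻¹' {z}) ≠ 0 →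
      0 < variance (fun ω => if Y ω then (1 : ℝ) else 0) (μ[|Z ⁻¹' {z}])) :
    -- A is independent of (Z, Y)
    ∀ a z y, μ (A ⁻¹' {a} ∩ (Z ⁻¹' {z} ∩ Y ⁻¹' {y})) =
      μ (A ⁻¹' {a}) * μ (Z ⁻¹' {z} ∩ Y ⁻¹' {y}) :=
  fairness_impossibility_refined_general μ Y A Z hY hZ hYA_Z hZA_Y hvar
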